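/- arXiv:2102.05034 — 2 statements merged into one kernel-verified Lean document; each statement's English description precedes it below -/
import Mathlib

section
/- Let n, m, q be natural numbers with n ≥ 2, m ≥ 1, q ≤ n − 2, and 2q + m ≤ C(n,2). Let V be an n-element vertex set and fix two distinct vertices v, u ∈ V. Let Ω be the set of all pairs (E, L) where E is an m-element edge set on V containing the pair {v,u}, and L is a q-element subset of V. Let S ⊆ Ω be the set of pairs (E, L) for which the edge {v,u} is starved. Then, as real numbers, |S| / |Ω| = (1 − q/n) · (1 − q/(n−1)) · ∏_{i=1}^{2q} (1 − (m−1)/(C(n,2) − i)). Equivalently, for an Erdős–Rényi graph with n nodes and m edges, conditioned on a fixed edge being present, with q labeled nodes chosen uniformly at random, the probability of that edge being a starved edge with a two-layer GCN equals this product. -/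
open Finset

private lemma choose_ratio (a k : ℕ) : ∀ s : ℕ, s + k ≤ a →
    ((a - s).choose k : ℝ) =
      (a.choose k : ℝ) * ∏ i ∈ Finset.Icc 1 s, (1 - (k : ℝ) / ((a : ℝ) - (i : ℝ) + 1))
  | 0, _ => by simp
  | s + 1, h => by
    have hs : s + k ≤ a := by omega
    have IH := choose_ratio a k s hs
    rw [Finset.prod_Icc_succ_top (by omega : 1 ≤ s + 1), ← mul_assoc, ← IH]
    have h1 : a - s - 1 + 1 = a - s := by omega
    have hid := Nat.choose_mul_succ_eq (a - s - 1) k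
    rw [h1] at hid
    have hcast : ((a - s : ℕ) : ℝ) = (a : ℝ) - s := by
      exact_mod_cast Nat.cast_sub (by omega : s ≤ a)
    have hcast2 : ((a - s - k : ℕ) : ℝ) = (a : ℝ) - s - k := by
      have : ((a - s - k : ℕ) : ℝ) = ((a - s : ℕ) : ℝ) - k := by
        exact_mod_cast Nat.cast_sub (by omega : k ≤ a - s)
      rw [this, hcast]
    have hidR : ((a - s - 1).choose k : ℝ) * ((a : ℝ) - s) =
        ((a - s).choose k : ℝ) * ((a : ℝ) - s - k) := by
      have := congrArg (Nat.cast : ℕ → ℝ) hid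
      push_cast at this
      rw [hcast, hcast2] at this
      exact_mod_cast this
    have h2 : a - (s + 1) = a - s - 1 := by omega
    have hne : (a : ℝ) - s ≠ 0 := by
      have : (s : ℝ) < a := by exact_mod_cast (by omega : s < a)
      linarith
    rw [h2]
    have hterm : (1 - (k : ℝ) / ((a : ℝ) - ((s : ℕ) + 1 : ℕ) + 1)) =
        ((a : ℝ) - s - k) / ((a : ℝ) - s) := by
      have hx : (a : ℝ) - ((s : ℕ) + 1 : ℕ) + 1 = (a : ℝ) - s := by push_cast; ring
      rw [hx, eq_div_iff hne, sub_mul, div_mul_cancel₀ _ hne]; ring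
    rw [hterm]
    field_simp
    linear_combination hidR

private lemma count_edges {V : Type*} [Fintype V] [DecidableEq V]
    (m : ℕ) (hm : 1 ≤ m) (v u : V) (hvu : v ≠ u)
    (F : Finset (Sym2 V)) (hFd : ∀ e ∈ F, ¬ e.IsDiag) (hF0 : s(v, u) ∉ F) :
    (Finset.univ.filter (fun E : Finset (Sym2 V) =>
      E.card = m ∧ (∀ e ∈ E, ¬ e.IsDiag) ∧ s(v, u) ∈ E ∧ ∀ f ∈ F, f ∉ E)).card
      = ((Fintype.card V).choose 2 - 1 - F.card).choose (m - 1) := by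
  classical
  set ND : Finset (Sym2 V) := Finset.univ.filter (fun e => ¬ e.IsDiag) with hND
  have hNDcard : ND.card = (Fintype.card V).choose 2 := by
    rw [hND, ← Sym2.card_subtype_not_diag (α := V)]
    exact (Fintype.card_subtype _).symm
  have hFsub : F ⊆ ND := fun f hf => by simp [hND, hFd f hf]
  have hvuND : s(v, u) ∈ ND := by simp [hND, Sym2.mk_isDiag_iff, hvu]
  set T : Finset (Sym2 V) := (ND \ F).erase s(v, u) with hT
  have hvuT : s(v, u) ∈ ND \ F := by simp [hvuND, hF0]
  have hTcard : T.card = (Fintype.card V).choose 2 - 1 - F.card := by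
    rw [hT, Finset.card_erase_of_mem hvuT, Finset.card_sdiff_of_subset hFsub, hNDcard]
    omega
  rw [← hTcard, ← Finset.card_powersetCard (m - 1) T]
  refine Finset.card_bij' (fun E _ => E.erase s(v, u)) (fun E' _ => insert s(v, u) E')
    ?_ ?_ ?_ ?_
  · intro E hE
    simp only [Finset.mem_filter, Finset.mem_univ, true_and] at hE
    obtain ⟨hc, hd, hmem, hdisj⟩ := hE
    rw [Finset.mem_powersetCard]
    refine ⟨fun e he => ?_, ?_⟩
    · rw [hT, Finset.mem_erase, Finset.mem_sdiff]
      rw [Finset.mem_erase] at he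
      refine ⟨he.1, ?_, fun hf => hdisj e hf he.2⟩
      simp [hND, hd e he.2]
    · rw [Finset.card_erase_of_mem hmem, hc]
  · intro E' hE'
    rw [Finset.mem_powersetCard] at hE'
    obtain ⟨hsub, hc⟩ := hE'
    have hnotmem : s(v, u) ∉ E' := fun h => Finset.notMem_erase _ _ (hsub h)
    simp only [Finset.mem_filter, Finset.mem_univ, true_and]
    refine ⟨?_, ?_, Finset.mem_insert_self _ _, ?_⟩
    · rw [Finset.card_insert_of_notMem hnotmem, hc]; omega
    · intro e he
      rcases Finset.mem_insert.mp he with h | h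
      · subst h; simp [Sym2.mk_isDiag_iff, hvu]
      · have := hsub h
        have := Finset.mem_of_mem_erase this
        have := (Finset.mem_sdiff.mp this).1
        simp [hND] at this
        exact this
    · intro f hf hmem
      rcases Finset.mem_insert.mp hmem with h | h
      · exact hF0 (h ▸ hf)
      · have := hsub h
        have := Finset.mem_of_mem_erase this
        exact (Finset.mem_sdiff.mp this).2 hf
  · intro E hE
    simp only [Finset.mem_filter, Finset.mem_univ, true_and] at hE
    exact Finset.insert_erase hE.2.2.1
  · intro E' hE'
    rw [Finset.mem_powersetCard] at hE'
    have hnotmem : s(v, u) ∉ E' := fun h => Finset.notMem_erase _ _ (hE'.1 h)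
    exact Finset.erase_insert hnotmem

/-- For an Erdős–Rényi graph with `n` nodes and `m` edges, conditioned on the fixed edge
`{v,u}` being present, with `q` labeled nodes chosen uniformly at random, the probability that
the edge `{v,u}` is starved (both endpoints unlabeled and neither endpoint adjacent to a
labeled node) equals
`(1 - q/n) * (1 - q/(n-1)) * ∏_{i=1}^{2q} (1 - (m-1)/(C(n,2) - i))`. -/
theorem starved_edge_probability {V : Type*} [Fintype V] [DecidableEq V]
    (n m q : ℕ) (hn : 2 ≤ n) (hm : 1 ≤ m) (hq : q ≤ n - 2)
    (hmq : 2 * q + m ≤ n.choose 2)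
    (hcard : Fintype.card V = n)
    (v u : V) (hvu : v ≠ u) :
    let Ω : Finset (Finset (Sym2 V) × Finset V) :=
      Finset.univ.filter (fun p =>
        p.1.card = m ∧ (∀ e ∈ p.1, ¬ e.IsDiag) ∧ s(v, u) ∈ p.1 ∧ p.2.card = q)
    let S : Finset (Finset (Sym2 V) × Finset V) :=
      Ω.filter (fun p =>
        v ∉ p.2 ∧ u ∉ p.2 ∧ ∀ ℓ ∈ p.2, s(v, ℓ) ∉ p.1 ∧ s(u, ℓ) ∉ p.1)
    (S.card : ℝ) / (Ω.card : ℝ) =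
      (1 - (q : ℝ) / (n : ℝ)) * (1 - (q : ℝ) / ((n : ℝ) - 1)) *
        ∏ i ∈ Finset.Icc 1 (2 * q),
          (1 - ((m : ℝ) - 1) / ((n.choose 2 : ℝ) - (i : ℝ))) := by
  intro Ω S
  classical
  set N := n.choose 2 with hNdef
  have hN : 2 * q + m ≤ N := hmq
  have hN1 : 1 ≤ N := by omega
  have hqn : q + 2 ≤ n := by omega
  -- cardinality of Ω
  have hΩcard : Ω.card = (N - 1).choose (m - 1) * n.choose q := by
    have hprod : Ω = (Finset.univ.filter (fun E : Finset (Sym2 V) =>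
        E.card = m ∧ (∀ e ∈ E, ¬ e.IsDiag) ∧ s(v, u) ∈ E)) ×ˢ
        (Finset.powersetCard q Finset.univ) := by
      ext p
      simp only [Ω, Finset.mem_filter, Finset.mem_univ, true_and, Finset.mem_product,
        Finset.mem_powersetCard_univ]
      tauto
    rw [hprod, Finset.card_product, Finset.card_powersetCard, Finset.card_univ, hcard]
    congr 1
    have hfc : (Finset.univ.filter (fun E : Finset (Sym2 V) =>
        E.card = m ∧ (∀ e ∈ E, ¬ e.IsDiag) ∧ s(v, u) ∈ E)) =
        (Finset.univ.filter (fun E : Finset (Sym2 V) =>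
        E.card = m ∧ (∀ e ∈ E, ¬ e.IsDiag) ∧ s(v, u) ∈ E ∧
          ∀ f ∈ (∅ : Finset (Sym2 V)), f ∉ E)) := by
      apply Finset.filter_congr
      intro E _
      simp
    rw [hfc, count_edges m hm v u hvu ∅ (by simp) (by simp), hcard]
    simp [hNdef]
  -- cardinality of S
  have hScard : S.card = (n - 2).choose q * (N - 1 - 2 * q).choose (m - 1) := by
    set Bf : Finset (Finset V) :=
      Finset.univ.filter (fun L : Finset V => L.card = q ∧ v ∉ L ∧ u ∉ L) with hBf
    have hfib : ∀ p ∈ S, p.2 ∈ Bf := by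
      intro p hp
      simp only [S, Ω, Finset.mem_filter, Finset.mem_univ, true_and] at hp
      simp only [hBf, Finset.mem_filter, Finset.mem_univ, true_and]
      exact ⟨hp.1.2.2.2, hp.2.1, hp.2.2.1⟩
    rw [Finset.card_eq_sum_card_fiberwise hfib]
    have hconst : ∀ L ∈ Bf,
        (S.filter (fun p => p.2 = L)).card = (N - 1 - 2 * q).choose (m - 1) := by
      intro L hL
      simp only [hBf, Finset.mem_filter, Finset.mem_univ, true_and] at hL
      obtain ⟨hLq, hvL, huL⟩ := hL
      set F : Finset (Sym2 V) :=
        L.image (fun ℓ => s(v, ℓ)) ∪ L.image (fun ℓ => s(u, ℓ)) with hFdef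
      have hFd : ∀ e ∈ F, ¬ e.IsDiag := by
        intro e he
        simp only [hFdef, Finset.mem_union, Finset.mem_image] at he
        rcases he with ⟨ℓ, hℓ, rfl⟩ | ⟨ℓ, hℓ, rfl⟩
        · simp only [Sym2.mk_isDiag_iff]; rintro rfl; exact hvL hℓ
        · simp only [Sym2.mk_isDiag_iff]; rintro rfl; exact huL hℓ
      have hF0 : s(v, u) ∉ F := by
        simp only [hFdef, Finset.mem_union, Finset.mem_image, not_or, not_exists]
        constructor
        · rintro ℓ ⟨hℓ, h⟩
          rcases Sym2.eq_iff.mp h with ⟨_, rfl⟩ | ⟨rfl, _⟩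
          · exact huL hℓ
          · exact hvu rfl
        · rintro ℓ ⟨hℓ, h⟩
          rcases Sym2.eq_iff.mp h with ⟨h1, _⟩ | ⟨_, rfl⟩
          · exact hvu h1.symm
          · exact hvL hℓ
      have hFcard : F.card = 2 * q := by
        rw [hFdef, Finset.card_union_of_disjoint, Finset.card_image_of_injective,
          Finset.card_image_of_injective, hLq]
        · ring
        · intro a b hab; exact Sym2.congr_right.mp hab
        · intro a b hab; exact Sym2.congr_right.mp hab
        · rw [Finset.disjoint_left]
          rintro e he1 he2
          simp only [Finset.mem_image] at he1 he2
          obtain ⟨ℓ, hℓ, rfl⟩ := he1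
          obtain ⟨ℓ', hℓ', h⟩ := he2
          rcases Sym2.eq_iff.mp h with ⟨rfl, _⟩ | ⟨rfl, rfl⟩
          · exact hvu rfl
          · exact hvL hℓ'
      have hfiber : S.filter (fun p => p.2 = L) =
          (Finset.univ.filter (fun E : Finset (Sym2 V) =>
            E.card = m ∧ (∀ e ∈ E, ¬ e.IsDiag) ∧ s(v, u) ∈ E ∧ ∀ f ∈ F, f ∉ E)) ×ˢ {L} := by
        ext ⟨E, L'⟩
        simp only [S, Ω, Finset.mem_filter, Finset.mem_univ, true_and, Finset.mem_product,
          Finset.mem_singleton, hFdef, Finset.mem_union, Finset.mem_image]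
        constructor
        · rintro ⟨⟨⟨hc, hd, hmem, _⟩, _, _, hstar⟩, rfl⟩
          refine ⟨⟨hc, hd, hmem, ?_⟩, rfl⟩
          rintro f hf
          rcases hf with ⟨ℓ, hℓ, rfl⟩ | ⟨ℓ, hℓ, rfl⟩
          · exact (hstar ℓ hℓ).1
          · exact (hstar ℓ hℓ).2
        · rintro ⟨⟨hc, hd, hmem, hforb⟩, rfl⟩
          exact ⟨⟨⟨hc, hd, hmem, hLq⟩, hvL, huL,
            fun ℓ hℓ => ⟨hforb _ (Or.inl ⟨ℓ, hℓ, rfl⟩), hforb _ (Or.inr ⟨ℓ, hℓ, rfl⟩)⟩⟩, rfl⟩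
      rw [hfiber, Finset.card_product, Finset.card_singleton, mul_one,
        count_edges m hm v u hvu F hFd hF0, hcard, hFcard]
    rw [Finset.sum_congr rfl hconst, Finset.sum_const, smul_eq_mul]
    congr 1
    -- card of Bf = (n-2).choose q
    have hBfeq : Bf = Finset.powersetCard q ((Finset.univ.erase v).erase u) := by
      ext L
      simp only [hBf, Finset.mem_filter, Finset.mem_univ, true_and,
        Finset.mem_powersetCard, Finset.subset_iff, Finset.mem_erase]
      constructor
      · rintro ⟨hLq, hvL, huL⟩
        exact ⟨fun x hx => ⟨fun h => huL (h ▸ hx), fun h => hvL (h ▸ hx), trivial⟩, hLq⟩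
      · rintro ⟨hsub, hLq⟩
        exact ⟨hLq, fun h => (hsub h).2.1 rfl, fun h => (hsub h).1 rfl⟩
    rw [hBfeq, Finset.card_powersetCard, Finset.card_erase_of_mem, Finset.card_erase_of_mem,
      Finset.card_univ, hcard]
    · congr 1
    · exact Finset.mem_univ v
    · exact Finset.mem_erase.mpr ⟨Ne.symm hvu, Finset.mem_univ u⟩
  -- arithmetic conclusion
  rw [hΩcard, hScard]
  have r1 := choose_ratio n q 2 (by omega)
  have r2 := choose_ratio (N - 1) (m - 1) (2 * q) (by omega)
  have hIcc2 : (Finset.Icc 1 2 : Finset ℕ) = {1, 2} := by decide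
  rw [hIcc2, Finset.prod_insert (by decide), Finset.prod_singleton] at r1
  norm_num at r1
  have hprod2 : ∏ i ∈ Finset.Icc 1 (2 * q), (1 - ((m : ℝ) - 1) / ((N : ℝ) - (i : ℝ))) =
      ∏ i ∈ Finset.Icc 1 (2 * q),
        (1 - ((m - 1 : ℕ) : ℝ) / (((N - 1 : ℕ) : ℝ) - (i : ℝ) + 1)) := by
    apply Finset.prod_congr rfl
    intro i _
    have h1 : ((m - 1 : ℕ) : ℝ) = (m : ℝ) - 1 := by
      rw [Nat.cast_sub hm, Nat.cast_one]
    have h2 : ((N - 1 : ℕ) : ℝ) = (N : ℝ) - 1 := by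
      rw [Nat.cast_sub hN1, Nat.cast_one]
    rw [h1, h2]; ring_nf
  have hfix : ((n : ℝ) - 2 + 1) = (n : ℝ) - 1 := by ring
  rw [hfix] at r1
  rw [Nat.cast_mul, Nat.cast_mul, hprod2, r2, r1]
  have hA : ((n.choose q : ℕ) : ℝ) ≠ 0 := by
    exact_mod_cast (Nat.choose_pos (by omega : q ≤ n)).ne'
  have hB : (((N - 1).choose (m - 1) : ℕ) : ℝ) ≠ 0 := by
    exact_mod_cast (Nat.choose_pos (by omega : m - 1 ≤ N - 1)).ne'
  field_simp
end

section
/- Let n, f, d₁, d₂ be natural numbers and let A, A' be n×n real matrices with all entries nonnegative. Fix two distinct indices v, u and suppose A and A' agree on every entry except possibly the entries (v,u) and (u,v). For a nonnegative n×n matrix B, let the normalized adjacency be B̂ = D⁻¹(B + I), where D is the diagonal matrix with D_{ii} = 1 + Σ_j B_{ij}, and let the two-layer GCN output be Z(B) = B̂ · ReLU(B̂ · X · W⁽¹⁾) · W⁽²⁾, where X is any n×f real matrix, W⁽¹⁾ is any f×d₁ real matrix, W⁽²⁾ is any d₁×d₂ real matrix, and ReLU is applied entrywise. Then for every index ℓ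 with ℓ ≠ v, ℓ ≠ u, A_{ℓv} = 0, and A_{ℓu} = 0, the ℓ-th row of Z(A) equals the ℓ-th row of Z(A'). Consequently, the predictions made by a two-layer GCN at a node ℓ that is neither an endpoint of the edge {v,u} nor adjacent to v or u do not depend on the weight of that edge, so starved edges do not affect the classification loss computed on labeled nodes. -/
open Finset Matrix

/-- For a nonnegative `n × n` adjacency matrix `B`, a two-layer GCN computes
`Z(B) = B̂ · ReLU(B̂ · X · W¹) · W²` where `B̂ = D⁻¹(B + I)` with `D` diagonal,
`D_{ii} = 1 + Σ_j B_{ij}`. If `A` and `A'` are nonnegative and agree on every entry except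
possibly `(v,u)` and `(u,v)` (for distinct `v, u`), then for every index `ℓ` with `ℓ ≠ v`,
`ℓ ≠ u`, `A_{ℓv} = 0`, and `A_{ℓu} = 0`, the `ℓ`-th row of `Z(A)` equals the `ℓ`-th row of
`Z(A')`: starved edges do not affect the two-layer GCN predictions at such nodes. -/
theorem starved_edge_no_effect_two_layer_gcn
    (n f d₁ d₂ : ℕ)
    (A A' : Matrix (Fin n) (Fin n) ℝ)
    (hA : ∀ i j, 0 ≤ A i j) (hA' : ∀ i j, 0 ≤ A' i j)
    (v u : Fin n) (hvu : v ≠ u)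
    (hagree : ∀ i j, (i, j) ≠ (v, u) → (i, j) ≠ (u, v) → A i j = A' i j)
    (X : Matrix (Fin n) (Fin f) ℝ)
    (W₁ : Matrix (Fin f) (Fin d₁) ℝ)
    (W₂ : Matrix (Fin d₁) (Fin d₂) ℝ) :
    let norm : Matrix (Fin n) (Fin n) ℝ → Matrix (Fin n) (Fin n) ℝ := fun B =>
      (Matrix.diagonal (fun i => 1 + ∑ j, B i j))⁻¹ * (B + 1)
    let Z : Matrix (Fin n) (Fin n) ℝ → Matrix (Fin n) (Fin d₂) ℝ := fun B =>
      norm B * ((norm B * X * W₁).map (fun x => max x 0)) * W₂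
    ∀ ℓ : Fin n, ℓ ≠ v → ℓ ≠ u → A ℓ v = 0 → A ℓ u = 0 →
      ∀ j : Fin d₂, Z A ℓ j = Z A' ℓ j := by
  intro norm Z ℓ hlv hlu hv0 hu0 j
  have hnorm : ∀ B : Matrix (Fin n) (Fin n) ℝ, (∀ i j, 0 ≤ B i j) → ∀ i k,
      norm B i k = (1 + ∑ j, B i j)⁻¹ * (B + 1) i k := by
    intro B hB i k
    have hd : ∀ i, (1 + ∑ j, B i j) ≠ 0 := fun i => by
      have := Finset.sum_nonneg fun j (_ : j ∈ Finset.univ) => hB i j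
      intro h; linarith
    have hinv : (Matrix.diagonal (fun i => 1 + ∑ j, B i j))⁻¹ =
        Matrix.diagonal (fun i => (1 + ∑ j, B i j)⁻¹) := by
      apply Matrix.inv_eq_right_inv
      rw [Matrix.diagonal_mul_diagonal]
      convert Matrix.diagonal_one
      exact mul_inv_cancel₀ (hd _)
    simp only [norm, hinv, Matrix.diagonal_mul]
  have hrow : ∀ i : Fin n, i ≠ v → i ≠ u → ∀ k, A i k = A' i k := by
    intro i hiv hiu k
    exact hagree i k (by simp [Prod.ext_iff, hiv]) (by simp [Prod.ext_iff, hiu])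
  have hnrow : ∀ i : Fin n, i ≠ v → i ≠ u → ∀ k, norm A i k = norm A' i k := by
    intro i hiv hiu k
    have hsum : (∑ j, A i j) = ∑ j, A' i j :=
      Finset.sum_congr rfl fun k _ => hrow i hiv hiu k
    rw [hnorm A hA, hnorm A' hA']
    simp [Matrix.add_apply, hsum, hrow i hiv hiu k]
  have hzAv : norm A ℓ v = 0 := by
    rw [hnorm A hA]
    simp [Matrix.add_apply, hv0, Matrix.one_apply_ne hlv]
  have hzAu : norm A ℓ u = 0 := by
    rw [hnorm A hA]
    simp [Matrix.add_apply, hu0, Matrix.one_apply_ne hlu]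
  simp only [Z, Matrix.mul_apply, Matrix.map_apply]
  refine Finset.sum_congr rfl fun m _ => ?_
  congr 1
  refine Finset.sum_congr rfl fun k _ => ?_
  by_cases hk : norm A ℓ k = 0
  · have hk' : norm A' ℓ k = 0 := (hnrow ℓ hlv hlu k) ▸ hk
    rw [hk, hk', zero_mul, zero_mul]
  · have hkv : k ≠ v := fun h => hk (h ▸ hzAv)
    have hku : k ≠ u := fun h => hk (h ▸ hzAu)
    rw [hnrow ℓ hlv hlu k]
    congr 2
    refine Finset.sum_congr rfl fun b _ => ?_
    congr 1
    refine Finset.sum_congr rfl fun c _ => ?_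
    rw [hnrow k hkv hku c]
end
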